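/- Let A be an m×m real symmetric positive semidefinite matrix with Moore–Penrose inverse A†, let α be a real scalar, and define the Newton–Raphson iterates A₀ = α A, A_{k+1} = 2 A_k − A_k A A_k. Then for every k ≥ 0 the spectral norm satisfies ‖A† − A_{k+1}‖ ≤ ‖A† − A_k‖ · ‖A A† − A A_k‖. -/

import Mathlib

open Matrix Filter

/-- The spectral norm (ℓ²-operator norm) of a real square matrix. -/
noncomputable def specNorm {m : ℕ} (M : Matrix (Fin m) (Fin m) ℝ) : ℝ :=
  ‖Matrix.toEuclideanCLM (𝕜 := ℝ) M‖

/-- `Ad` is the Moore–Penrose inverse of `A`: the Penrose equations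
`A Ad A = A`, `Ad A Ad = Ad`, `(A Ad)ᵀ = A Ad`, `(Ad A)ᵀ = Ad A`. -/
def IsMoorePenroseInv {m n : ℕ} (A : Matrix (Fin m) (Fin n) ℝ)
    (Ad : Matrix (Fin n) (Fin m) ℝ) : Prop :=
  A * Ad * A = A ∧ Ad * A * Ad = Ad ∧ (A * Ad)ᵀ = A * Ad ∧ (Ad * A)ᵀ = Ad * A

/-!
Each Newton–Raphson iterate `N` satisfies `N A A† = N` and `A† A N = N` (true for `N₀ = α A`
because `A` is symmetric, and preserved by the iteration). With these identities and
`A† A A† = A†`, expanding the product gives the exact factorisation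
`A† - N_{k+1} = (A† - N_k)(A A† - A N_k)`, and the bound is submultiplicativity of the
operator norm.
-/

section NewtonStep

variable {R : Type*} [Ring R] {a ad n : R}

lemma newton_step_mul_mul_eq (h : n * a * ad = n) :
    (n + n - n * a * n) * a * ad = n + n - n * a * n := by
  simp only [sub_mul, add_mul, mul_assoc] at h ⊢
  rw [h]

lemma mul_mul_newton_step_eq (h : ad * a * n = n) :
    ad * a * (n + n - n * a * n) = n + n - n * a * n := by
  simp only [mul_sub, mul_add, ← mul_assoc] at h ⊢
  rw [h]

lemma sub_newton_step_eq_mul (had : ad * a * ad = ad) (hr : n * a * ad = n)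
    (hl : ad * a * n = n) :
    ad - (n + n - n * a * n) = (ad - n) * (a * ad - a * n) := by
  simp only [sub_mul, mul_sub, ← mul_assoc]
  rw [had, hr, hl]
  abel

end NewtonStep

namespace IsMoorePenroseInv

variable {m : ℕ} {A Ad : Matrix (Fin m) (Fin m) ℝ}

lemma self_mul_self_mul_inv_eq_self (h : IsMoorePenroseInv A Ad) (hA : A.IsSymm) :
    A * A * Ad = A :=
  calc A * A * Ad = Aᵀ * (A * Ad)ᵀ := by rw [hA.eq, h.2.2.1, mul_assoc]
    _ = (A * Ad * A)ᵀ := (transpose_mul _ _).symm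
    _ = A := by rw [h.1, hA.eq]

lemma inv_mul_self_mul_self_eq_self (h : IsMoorePenroseInv A Ad) (hA : A.IsSymm) :
    Ad * A * A = A :=
  calc Ad * A * A = (Ad * A)ᵀ * Aᵀ := by rw [hA.eq, h.2.2.2]
    _ = (A * (Ad * A))ᵀ := (transpose_mul _ _).symm
    _ = A := by rw [← mul_assoc, h.1, hA.eq]

end IsMoorePenroseInv

lemma specNorm_mul_le {m : ℕ} (M P : Matrix (Fin m) (Fin m) ℝ) :
    specNorm (M * P) ≤ specNorm M * specNorm P := by
  unfold specNorm
  rw [_root_.map_mul]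
  exact norm_mul_le _ _

/-- In spectral norm,
`‖Ad - N_{k+1}‖ ≤ ‖Ad - N_k‖ ⬝ ‖A Ad - A N_k‖`. -/
theorem newton_raphson_error_norm_bound {m : ℕ}
    (A Ad : Matrix (Fin m) (Fin m) ℝ)
    (hA : A.PosSemidef)
    (hMP : IsMoorePenroseInv A Ad)
    (α : ℝ) (N : ℕ → Matrix (Fin m) (Fin m) ℝ)
    (hN0 : N 0 = α • A)
    (hNrec : ∀ k, N (k + 1) = (2 : ℝ) • N k - N k * A * N k) :
    ∀ k, specNorm (Ad - N (k + 1)) ≤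
      specNorm (Ad - N k) * specNorm (A * Ad - A * N k) := by
  have hsymm : A.IsSymm := isHermitian_iff_isSymm.mp hA.isHermitian
  have hfix : ∀ k, N k * A * Ad = N k ∧ Ad * A * N k = N k := by
    intro k
    induction k with
    | zero =>
      rw [hN0, smul_mul_assoc, smul_mul_assoc, mul_smul_comm,
        hMP.self_mul_self_mul_inv_eq_self hsymm, hMP.inv_mul_self_mul_self_eq_self hsymm]
      exact ⟨rfl, rfl⟩
    | succ k ih =>
      rw [hNrec, two_smul]
      exact ⟨newton_step_mul_mul_eq ih.1, mul_mul_newton_step_eq ih.2⟩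
  intro k
  rw [hNrec, two_smul, sub_newton_step_eq_mul hMP.2.1 (hfix k).1 (hfix k).2]
  exact specNorm_mul_le _ _
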